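/- arXiv:1209.0515 — 6 statements merged into one kernel-verified Lean document; each statement's English description precedes it below -/
import Mathlib

section
/- The 4-belts of G_P are exactly the four vertex sets {b,c,d,e}, {a,c,e,i}, {b,c,e,i}, and {f,g,h,j}; in particular G_P has exactly four 4-belts. -/
/-- Edge list of the facet-intersection graph `G_P` of the polytope `𝒫`
(vertices: a=0, b=1, c=2, d=3, e=4, f=5, g=6, h=7, i=8, j=9, k=10). -/
def pEdgeList : List (Fin 11 × Fin 11) :=
  [(0,1),(0,2),(0,3),(0,4),(1,2),(1,4),(1,5),(1,6),(2,3),(2,6),(2,7),(2,8),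
   (3,4),(3,8),(4,5),(4,8),(4,9),(5,6),(5,9),(5,10),(6,7),(6,10),(7,8),(7,9),
   (7,10),(8,9),(9,10)]

/-- The facet-intersection graph `G_P` of the polytope `𝒫`. -/
def G_P : SimpleGraph (Fin 11) where
  Adj u v := (u, v) ∈ pEdgeList ∨ (v, u) ∈ pEdgeList
  symm := ⟨fun u v h => h.symm⟩
  loopless := ⟨by intro v; fin_cases v <;> decide⟩

instance : DecidableRel G_P.Adj :=
  fun u v => inferInstanceAs (Decidable ((u, v) ∈ pEdgeList ∨ (v, u) ∈ pEdgeList))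

/-- A 4-belt of a simple graph `G` is a 4-element vertex set that can be written as
`{w, x, y, z}` where `wx`, `xy`, `yz`, `zw` are edges of `G` while `wy`, `xz` are not. -/
def IsFourBelt {V : Type*} (G : SimpleGraph V) (B : Set V) : Prop :=
  ∃ w x y z : V, B = {w, x, y, z} ∧ B.ncard = 4 ∧
    G.Adj w x ∧ G.Adj x y ∧ G.Adj y z ∧ G.Adj z w ∧ ¬ G.Adj w y ∧ ¬ G.Adj x z

/-- The pair `{u, v}` is a diagonal of the 4-belt `B` of `G`. -/
def IsDiagonalOfBelt {V : Type*} (G : SimpleGraph V) (u v : V) (B : Set V) : Prop :=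
  ∃ w x y z : V, B = {w, x, y, z} ∧ B.ncard = 4 ∧
    G.Adj w x ∧ G.Adj x y ∧ G.Adj y z ∧ G.Adj z w ∧ ¬ G.Adj w y ∧ ¬ G.Adj x z ∧
    (({u, v} : Set V) = {w, y} ∨ ({u, v} : Set V) = {x, z})

/-- The pair `{u, v}` is a diagonal of some 4-belt of `G`. -/
def IsBeltDiagonal {V : Type*} (G : SimpleGraph V) (u v : V) : Prop :=
  ∃ B : Set V, IsDiagonalOfBelt G u v B

/-! A 4-belt is exactly the vertex set of an induced 4-cycle on four distinct vertices, so the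
claim reduces to a finite check: every induced 4-cycle of `G_P`, found by exhaustive search over
the `11 ^ 4` quadruples, spans one of the four listed sets, and each listed set is spanned by one. -/

theorem Set.ncard_quad_eq_four_iff {α : Type*} {a b c d : α} :
    ({a, b, c, d} : Set α).ncard = 4 ↔ a ≠ b ∧ a ≠ c ∧ a ≠ d ∧ b ≠ c ∧ b ≠ d ∧ c ≠ d := by
  classical
  rw [← Finset.coe_pair, ← Finset.coe_insert, ← Finset.coe_insert, Set.ncard_coe_finset]
  aesop (add simp Finset.card_insert_eq_ite)

namespace SimpleGraph

variable {V : Type*} (G : SimpleGraph V)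

def IsInducedFourCycle (w x y z : V) : Prop :=
  w ≠ y ∧ x ≠ z ∧ G.Adj w x ∧ G.Adj x y ∧ G.Adj y z ∧ G.Adj z w ∧ ¬ G.Adj w y ∧ ¬ G.Adj x z

instance [DecidableEq V] [DecidableRel G.Adj] (w x y z : V) :
    Decidable (G.IsInducedFourCycle w x y z) :=
  inferInstanceAs (Decidable (_ ∧ _ ∧ _ ∧ _ ∧ _ ∧ _ ∧ _ ∧ _))

variable {G}

theorem isFourBelt_iff {B : Set V} :
    IsFourBelt G B ↔ ∃ w x y z, G.IsInducedFourCycle w x y z ∧ B = {w, x, y, z} := by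
  constructor
  · rintro ⟨w, x, y, z, rfl, hcard, hwx, hxy, hyz, hzw, hwy, hxz⟩
    obtain ⟨-, hwy', -, -, hxz', -⟩ := Set.ncard_quad_eq_four_iff.1 hcard
    exact ⟨w, x, y, z, ⟨hwy', hxz', hwx, hxy, hyz, hzw, hwy, hxz⟩, rfl⟩
  · rintro ⟨w, x, y, z, ⟨hwy', hxz', hwx, hxy, hyz, hzw, hwy, hxz⟩, rfl⟩
    refine ⟨w, x, y, z, rfl, ?_, hwx, hxy, hyz, hzw, hwy, hxz⟩
    exact Set.ncard_quad_eq_four_iff.2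
      ⟨hwx.ne, hwy', hzw.ne.symm, hxy.ne, hxz', hyz.ne⟩

end SimpleGraph

namespace G_P

def fourBelts : Finset (Finset (Fin 11)) := {{1, 2, 3, 4}, {0, 2, 4, 8}, {1, 2, 4, 8}, {5, 6, 7, 9}}

theorem mem_fourBelts_of_isInducedFourCycle : ∀ w x y z : Fin 11,
    G_P.IsInducedFourCycle w x y z → ({w, x, y, z} : Finset (Fin 11)) ∈ fourBelts := by
  decide

theorem exists_isInducedFourCycle_of_mem_fourBelts : ∀ s ∈ fourBelts,
    ∃ w x y z : Fin 11, G_P.IsInducedFourCycle w x y z ∧ s = {w, x, y, z} := by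
  simp only [fourBelts, Finset.mem_insert, Finset.mem_singleton]
  rintro s (rfl | rfl | rfl | rfl)
  exacts [⟨1, 2, 3, 4, by decide, rfl⟩, ⟨0, 2, 8, 4, by decide, by decide⟩,
    ⟨1, 2, 8, 4, by decide, by decide⟩, ⟨5, 6, 7, 9, by decide, rfl⟩]

theorem setOf_isFourBelt :
    {B : Set (Fin 11) | IsFourBelt G_P B} = (↑) '' (fourBelts : Set (Finset (Fin 11))) := by
  ext B
  simp only [Set.mem_ofPred_eq, SimpleGraph.isFourBelt_iff, Set.mem_image, Finset.mem_coe]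
  constructor
  · rintro ⟨w, x, y, z, hcycle, rfl⟩
    exact ⟨_, mem_fourBelts_of_isInducedFourCycle w x y z hcycle, by push_cast; rfl⟩
  · rintro ⟨s, hs, rfl⟩
    obtain ⟨w, x, y, z, hcycle, rfl⟩ := exists_isInducedFourCycle_of_mem_fourBelts s hs
    exact ⟨w, x, y, z, hcycle, by push_cast; rfl⟩

end G_P

/-- The 4-belts of `G_P` are exactly the four vertex sets {b,c,d,e}, {a,c,e,i},
{b,c,e,i} and {f,g,h,j}; in particular `G_P` has exactly four 4-belts. -/
theorem stmt_4 :
    {B : Set (Fin 11) | IsFourBelt G_P B} =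
      {({1, 2, 3, 4} : Set (Fin 11)), {0, 2, 4, 8}, {1, 2, 4, 8}, {5, 6, 7, 9}} ∧
    {B : Set (Fin 11) | IsFourBelt G_P B}.ncard = 4 := by
  rw [G_P.setOf_isFourBelt]
  constructor
  · simp [G_P.fourBelts, Set.image_insert_eq]
  · rw [Set.ncard_image_of_injective _ Finset.coe_injective, Set.ncard_coe_finset]
    rfl
end

section
/- The set of non-adjacent vertex pairs of G_P that occur as a diagonal of some 4-belt of G_P is exactly the six pairs {b,d}, {c,e}, {a,i}, {b,i}, {f,h}, {g,j}. -/
/-! A pair `{u, v}` is a diagonal of a 4-belt exactly when `u ≠ v` are non-adjacent opposite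
corners of a 4-cycle `u - x - v - z` whose other diagonal `{x, z}` is also a non-edge. This
characterisation is decidable on `Fin 11`, so the six diagonals of `G_P` are found by exhaustive
search. -/

theorem Set.ncard_triple_le {α : Type*} (a b c : α) : ({a, b, c} : Set α).ncard ≤ 3 := by
  classical
  simpa using (Set.ncard_coe_finset ({a, b, c} : Finset α)).le.trans Finset.card_le_three

theorem Set.ncard_quadruple {α : Type*} {a b c d : α} (hab : a ≠ b) (hac : a ≠ c) (had : a ≠ d)
    (hbc : b ≠ c) (hbd : b ≠ d) (hcd : c ≠ d) : ({a, b, c, d} : Set α).ncard = 4 := by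
  rw [Set.ncard_insert_of_notMem (by simp [hab, hac, had]),
    Set.ncard_insert_of_notMem (by simp [hbc, hbd]),
    Set.ncard_insert_of_notMem (by simp [hcd]), Set.ncard_singleton]

section
variable {V : Type*} {G : SimpleGraph V} {u v : V}

theorem isBeltDiagonal_iff : IsBeltDiagonal G u v ↔ u ≠ v ∧ ¬ G.Adj u v ∧
    ∃ x z, x ≠ z ∧ ¬ G.Adj x z ∧ G.Adj u x ∧ G.Adj x v ∧ G.Adj v z ∧ G.Adj z u := by
  constructor
  · rintro ⟨B, w, x, y, z, rfl, hcard, hwx, hxy, hyz, hzw, hwy, hxz, hpair⟩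
    have hwy' : w ≠ y := by
      rintro rfl
      have : ({w, x, w, z} : Set V) = {x, w, z} := Set.insert_eq_of_mem (by simp)
      have := Set.ncard_triple_le x w z
      simp_all
    have hxz' : x ≠ z := by
      rintro rfl
      have : ({w, x, y, x} : Set V) = {w, x, y} := by
        ext; simp only [Set.mem_insert_iff, Set.mem_singleton_iff]; tauto
      have := Set.ncard_triple_le w x y
      simp_all
    rcases hpair with hp | hp <;> rcases Set.pair_eq_pair_iff.1 hp with ⟨rfl, rfl⟩ | ⟨rfl, rfl⟩
    · exact ⟨hwy', hwy, x, z, hxz', hxz, hwx, hxy, hyz, hzw⟩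
    · exact ⟨hwy'.symm, fun h => hwy h.symm, x, z, hxz', hxz, hxy.symm, hwx.symm, hzw.symm,
        hyz.symm⟩
    · exact ⟨hxz', hxz, y, w, hwy'.symm, fun h => hwy h.symm, hxy, hyz, hzw, hwx⟩
    · exact ⟨hxz'.symm, fun h => hxz h.symm, y, w, hwy'.symm, fun h => hwy h.symm, hyz.symm,
        hxy.symm, hwx.symm, hzw.symm⟩
  · rintro ⟨huv, hnuv, x, z, hxz, hnxz, hux, hxv, hvz, hzu⟩
    exact ⟨{u, x, v, z}, u, x, v, z, rfl,
      Set.ncard_quadruple hux.ne huv hzu.ne.symm hxv.ne hxz hvz.ne, hux, hxv, hvz, hzu, hnuv, hnxz,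
      Or.inl rfl⟩

end

theorem G_P_isBeltDiagonal_iff (u v : Fin 11) : IsBeltDiagonal G_P u v ↔
    s(u, v) ∈ ({s(1, 3), s(2, 4), s(0, 8), s(1, 8), s(5, 7), s(6, 9)} : Finset (Sym2 (Fin 11))) := by
  rw [isBeltDiagonal_iff]
  revert u v
  decide

/-- The non-adjacent vertex pairs of `G_P` occurring as a diagonal of some 4-belt of
`G_P` are exactly the six pairs {b,d}, {c,e}, {a,i}, {b,i}, {f,h}, {g,j}. -/
theorem stmt_6 :
    {p : Set (Fin 11) | ∃ u v : Fin 11, u ≠ v ∧ ¬ G_P.Adj u v ∧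
        IsBeltDiagonal G_P u v ∧ p = {u, v}} =
      {({1, 3} : Set (Fin 11)), {2, 4}, {0, 8}, {1, 8}, {5, 7}, {6, 9}} := by
  ext p
  constructor
  · rintro ⟨u, v, -, -, h, rfl⟩
    rw [G_P_isBeltDiagonal_iff] at h
    simp only [Set.mem_insert_iff, Set.mem_singleton_iff, Set.pair_eq_pair_iff]
    revert u v
    decide
  · rintro (rfl | rfl | rfl | rfl | rfl | rfl) <;>
      exact ⟨_, _, by decide, by decide, (G_P_isBeltDiagonal_iff _ _).2 (by decide), rfl⟩
end

section
/- There is no graph isomorphism between G_P and G_Q; that is, no bijection of Fin 11 to itself maps the edge set of G_P onto the edge set of G_Q. Consequently the polytopes 𝒫 and 𝒬 are not combinatorially equivalent. -/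
/-- Edge list of the facet-intersection graph `G_Q` of the polytope `𝒬`
(vertices: a=0, b=1, c=2, d=3, e=4, f=5, g=6, h=7, i=8, j=9, k=10). -/
def qEdgeList : List (Fin 11 × Fin 11) :=
  [(0,1),(0,2),(0,3),(0,4),(0,5),(1,2),(1,5),(1,6),(2,3),(2,6),(2,7),(2,8),
   (3,4),(3,8),(3,9),(4,5),(4,9),(5,6),(5,9),(5,10),(6,7),(6,10),(7,8),(7,9),
   (7,10),(8,9),(9,10)]

/-- The facet-intersection graph `G_Q` of the polytope `𝒬`. -/
def G_Q : SimpleGraph (Fin 11) where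
  Adj u v := (u, v) ∈ qEdgeList ∨ (v, u) ∈ qEdgeList
  symm := ⟨fun u v h => h.symm⟩
  loopless := ⟨by intro v; fin_cases v <;> decide⟩

instance : DecidableRel G_Q.Adj :=
  fun u v => inferInstanceAs (Decidable ((u, v) ∈ qEdgeList ∨ (v, u) ∈ qEdgeList))

/-! Graph isomorphisms preserve degrees, hence the number of vertices of each degree.
`G_P` has two vertices of degree 6 (c and e) while `G_Q` has three (c, f and j). -/

open Finset

theorem SimpleGraph.Iso.card_filter_degree_eq {V W : Type*} [Fintype V] [Fintype W]
    {G : SimpleGraph V} {G' : SimpleGraph W} [DecidableRel G.Adj] [DecidableRel G'.Adj]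
    (f : G ≃g G') (d : ℕ) : #{v | G.degree v = d} = #{w | G'.degree w = d} :=
  Finset.card_equiv f.toEquiv fun v => by
    simp only [mem_filter, mem_univ, true_and]
    exact (f.degree_eq v).symm ▸ Iff.rfl

theorem G_P_card_filter_degree_six : #{v | G_P.degree v = 6} = 2 := by decide

theorem G_Q_card_filter_degree_six : #{v | G_Q.degree v = 6} = 3 := by decide

/-- There is no graph isomorphism between `G_P` and `G_Q`: no bijection of `Fin 11`
maps the edge set of `G_P` onto the edge set of `G_Q`. -/
theorem stmt_10 :
    ¬ ∃ φ : Equiv.Perm (Fin 11), ∀ u v : Fin 11, G_P.Adj u v ↔ G_Q.Adj (φ u) (φ v) := by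
  rintro ⟨φ, h⟩
  let e : G_P ≃g G_Q := ⟨φ, (h _ _).symm⟩
  have hcard := e.card_filter_degree_eq 6
  rw [G_P_card_filter_degree_six, G_Q_card_filter_degree_six] at hcard
  exact absurd hcard (by decide)
end

section
/- In G_P, the non-adjacent pair {c,e} is a diagonal of exactly three distinct 4-belts (namely {b,c,d,e}, {a,c,e,i} and {b,c,e,i}), whereas in G_Q every non-adjacent vertex pair is a diagonal of at most one 4-belt. -/
/-! Rotating and reflecting the 4-cycle, every 4-belt with diagonal `{u, v}` can be written as
`{u, x, v, z}`, so the belts with a given diagonal are the images of a finite search over the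
pairs `(x, z)`, and both claims become computations that `decide` checks. -/

section

variable {V : Type*} {G : SimpleGraph V}

theorem isDiagonalOfBelt_iff {u v : V} {B : Set V} :
    IsDiagonalOfBelt G u v B ↔
      ∃ x z : V, B = {u, x, v, z} ∧ B.ncard = 4 ∧
        G.Adj u x ∧ G.Adj x v ∧ G.Adj v z ∧ G.Adj z u ∧ ¬ G.Adj u v ∧ ¬ G.Adj x z := by
  constructor
  · rintro ⟨w, x, y, z, rfl, hc, hwx, hxy, hyz, hzw, hwy, hxz, hd | hd⟩ <;>
      rcases Set.pair_eq_pair_iff.mp hd with ⟨rfl, rfl⟩ | ⟨rfl, rfl⟩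
    · exact ⟨x, z, rfl, hc, hwx, hxy, hyz, hzw, hwy, hxz⟩
    · exact ⟨z, x, by grind, hc, hyz, hzw, hwx, hxy, fun h ↦ hwy h.symm,
        fun h ↦ hxz h.symm⟩
    · exact ⟨y, w, by grind, hc, hxy, hyz, hzw, hwx, hxz, fun h ↦ hwy h.symm⟩
    · exact ⟨w, y, by grind, hc, hzw, hwx, hxy, hyz, fun h ↦ hxz h.symm, hwy⟩
  · rintro ⟨x, z, hB, hc, hux, hxv, hvz, hzu, huv, hxz⟩
    exact ⟨u, x, v, z, hB, hc, hux, hxv, hvz, hzu, huv, hxz, Or.inl rfl⟩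

variable [Fintype V] [DecidableEq V] [DecidableRel G.Adj]

def beltsWithDiagonal (G : SimpleGraph V) [DecidableRel G.Adj] (u v : V) : Finset (Finset V) :=
  ((Finset.univ : Finset (V × V)).filter fun p =>
    ({u, p.1, v, p.2} : Finset V).card = 4 ∧ G.Adj u p.1 ∧ G.Adj p.1 v ∧
      G.Adj v p.2 ∧ G.Adj p.2 u ∧ ¬ G.Adj u v ∧ ¬ G.Adj p.1 p.2).image
    fun p => {u, p.1, v, p.2}

theorem setOf_isDiagonalOfBelt_eq {u v : V} :
    {B : Set V | IsDiagonalOfBelt G u v B} =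
      (↑) '' (beltsWithDiagonal G u v : Set (Finset V)) := by
  ext B
  simp only [Set.mem_ofPred_eq, isDiagonalOfBelt_iff, beltsWithDiagonal, Finset.coe_image,
    Finset.coe_filter, Finset.mem_univ, true_and, Set.mem_image, Prod.exists]
  constructor
  · rintro ⟨x, z, rfl, hc, h⟩
    exact ⟨_, ⟨x, z, ⟨by rw [← Set.ncard_coe_finset]; push_cast; exact hc, h⟩, rfl⟩,
      by push_cast; rfl⟩
  · rintro ⟨_, ⟨x, z, ⟨hc, h⟩, rfl⟩, rfl⟩
    exact ⟨x, z, by push_cast; rfl, by rwa [Set.ncard_coe_finset], h⟩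

theorem ncard_setOf_isDiagonalOfBelt {u v : V} :
    {B : Set V | IsDiagonalOfBelt G u v B}.ncard = (beltsWithDiagonal G u v).card := by
  rw [setOf_isDiagonalOfBelt_eq, Set.ncard_image_of_injective _ Finset.coe_injective,
    Set.ncard_coe_finset]

end

/-- In `G_P` the non-adjacent pair {c,e} is a diagonal of exactly three distinct
4-belts (namely {b,c,d,e}, {a,c,e,i} and {b,c,e,i}), whereas in `G_Q` every
non-adjacent vertex pair is a diagonal of at most one 4-belt. -/
theorem stmt_11 :
    (¬ G_P.Adj 2 4 ∧
      {B : Set (Fin 11) | IsDiagonalOfBelt G_P 2 4 B} =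
        {({1, 2, 3, 4} : Set (Fin 11)), {0, 2, 4, 8}, {1, 2, 4, 8}} ∧
      {B : Set (Fin 11) | IsDiagonalOfBelt G_P 2 4 B}.ncard = 3) ∧
    (∀ u v : Fin 11, u ≠ v → ¬ G_Q.Adj u v →
      {B : Set (Fin 11) | IsDiagonalOfBelt G_Q u v B}.ncard ≤ 1) := by
  have hP : beltsWithDiagonal G_P 2 4 = {{1, 2, 3, 4}, {0, 2, 4, 8}, {1, 2, 4, 8}} := by
    decide
  have hQ : ∀ u v : Fin 11, (beltsWithDiagonal G_Q u v).card ≤ 1 := by decide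
  refine ⟨⟨by decide, ?_, ?_⟩, fun u v _ _ ↦ ?_⟩
  · rw [setOf_isDiagonalOfBelt_eq, hP]
    simp only [Set.image_insert_eq, Set.image_singleton, Finset.coe_insert,
      Finset.coe_singleton]
  · rw [ncard_setOf_isDiagonalOfBelt, hP]
    rfl
  · rw [ncard_setOf_isDiagonalOfBelt]
    exact hQ u v
end

section
/- The sum over all 3-element vertex subsets σ of (c(σ) − 1), where c(σ) is the number of connected components of the induced subgraph on σ, equals 105 for G_P, and the same sum equals 105 for G_Q. -/
/-!
On three vertices, a graph with `e` edges has `c` connected components where `c - 1 = 2 - e`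
in truncated arithmetic (so that the triangle fits too): no edges leave three components, a
single edge leaves two, and two edges share a vertex, so they connect everything. Counting the
edges of `G` inside `σ` as `#(G.edgeFinset ∩ σ.sym2)` turns each sum into a finite computation
over the 165 triples.
-/

open Finset

namespace SimpleGraph

variable {V : Type*} {H : SimpleGraph V}

lemma Reachable.eq_of_forall_not_adj {u v : V} (hv : ∀ w, ¬H.Adj v w) (h : H.Reachable u v) :
    u = v := by
  obtain ⟨_ | ⟨hadj, _⟩⟩ := h.symm
  · rfl
  · exact absurd hadj (hv _)

lemma card_connectedComponent_bot :
    Nat.card (⊥ : SimpleGraph V).ConnectedComponent = Nat.card V :=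
  (Nat.card_eq_of_bijective _ ⟨fun _ _ h => reachable_bot.mp (ConnectedComponent.exact h),
    Quot.mk_surjective⟩).symm

lemma Connected.card_connectedComponent (h : H.Connected) : Nat.card H.ConnectedComponent = 1 :=
  Nat.card_eq_one_iff_unique.mpr
    ⟨h.preconnected.subsingleton_connectedComponent,
      ⟨H.connectedComponentMk h.nonempty.some⟩⟩

lemma connected_of_forall_eq_or_adj (x : V) (h : ∀ v, v = x ∨ H.Adj x v) : H.Connected := by
  have hx : ∀ v, H.Reachable x v := fun v => by
    rcases h v with rfl | hadj
    · rfl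
    · exact hadj.reachable
  exact { preconnected := fun u v => (hx u).symm.trans (hx v), nonempty := ⟨x⟩ }

variable {x y z : V}

lemma card_connectedComponent_eq_two (hcov : ∀ v, v = x ∨ v = y ∨ v = z) (hxy : H.Adj x y)
    (hz : ∀ w, ¬H.Adj z w) : Nat.card H.ConnectedComponent = 2 := by
  have hxz : x ≠ z := by rintro rfl; exact hz y hxy
  refine Nat.card_eq_two_iff.mpr ⟨H.connectedComponentMk x, H.connectedComponentMk z,
    fun h => hxz (ConnectedComponent.exact h |>.eq_of_forall_not_adj hz), ?_⟩
  refine Set.eq_univ_of_forall (ConnectedComponent.ind fun v => ?_)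
  rcases hcov v with rfl | rfl | rfl
  · exact .inl rfl
  · exact .inl (ConnectedComponent.sound hxy.reachable).symm
  · exact .inr rfl

variable [Fintype V] [DecidableRel H.Adj]

lemma two_le_card_edgeFinset (hxy : H.Adj x y) (hxz : H.Adj x z) (hyz : y ≠ z) :
    2 ≤ #H.edgeFinset := by
  classical
  calc 2 = #{s(x, y), s(x, z)} := (card_pair (Sym2.congr_right.not.mpr hyz)).symm
    _ ≤ #H.edgeFinset := card_le_card (by simp [insert_subset_iff, hxy, hxz])

lemma edgeFinset_eq_singleton (hcov : ∀ v, v = x ∨ v = y ∨ v = z) (hxy : H.Adj x y)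
    (hz : ∀ w, ¬H.Adj z w) : H.edgeFinset = {s(x, y)} := by
  refine eq_singleton_iff_unique_mem.mpr ⟨by simpa using hxy, ?_⟩
  rintro ⟨u, v⟩ huv
  rw [mem_edgeFinset, mem_edgeSet] at huv
  rcases hcov u with rfl | rfl | rfl <;> rcases hcov v with rfl | rfl | rfl <;>
    first
    | exact absurd huv (H.loopless.irrefl _)
    | exact absurd huv (hz _)
    | exact absurd huv.symm (hz _)
    | simp [Sym2.eq_swap]

lemma card_connectedComponent_sub_one_of_adj_of_adj (hcov : ∀ v, v = x ∨ v = y ∨ v = z)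
    (hxy : H.Adj x y) (hxz : H.Adj x z) (hyz : y ≠ z) :
    Nat.card H.ConnectedComponent - 1 = 2 - #H.edgeFinset := by
  have hconn : H.Connected := connected_of_forall_eq_or_adj x fun v => by
    rcases hcov v with rfl | rfl | rfl
    exacts [.inl rfl, .inr hxy, .inr hxz]
  have := two_le_card_edgeFinset hxy hxz hyz
  rw [hconn.card_connectedComponent]
  omega

lemma card_connectedComponent_sub_one_of_adj_of_not_adj (hcov : ∀ v, v = x ∨ v = y ∨ v = z)
    (hxy : H.Adj x y) (hzx : ¬H.Adj z x) (hzy : ¬H.Adj z y) :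
    Nat.card H.ConnectedComponent - 1 = 2 - #H.edgeFinset := by
  have hz : ∀ w, ¬H.Adj z w := fun w => by
    rcases hcov w with rfl | rfl | rfl <;> simp [hzx, hzy]
  rw [card_connectedComponent_eq_two hcov hxy hz, edgeFinset_eq_singleton hcov hxy hz,
    card_singleton]

lemma card_connectedComponent_sub_one_of_card_eq_three (hV : Fintype.card V = 3) :
    Nat.card H.ConnectedComponent - 1 = 2 - #H.edgeFinset := by
  classical
  obtain ⟨x, y, z, hxy, hxz, hyz, huniv⟩ := card_eq_three.mp hV
  have hcov : ∀ v, v = x ∨ v = y ∨ v = z := fun v => by simpa [huniv] using mem_univ v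
  have hcov_yxz : ∀ v, v = y ∨ v = x ∨ v = z := fun v => by have := hcov v; tauto
  have hcov_zxy : ∀ v, v = z ∨ v = x ∨ v = y := fun v => by have := hcov v; tauto
  have hcov_xzy : ∀ v, v = x ∨ v = z ∨ v = y := fun v => by have := hcov v; tauto
  have hcov_yzx : ∀ v, v = y ∨ v = z ∨ v = x := fun v => by have := hcov v; tauto
  by_cases adj_xy : H.Adj x y <;> by_cases adj_xz : H.Adj x z <;> by_cases adj_yz : H.Adj y z
  · exact card_connectedComponent_sub_one_of_adj_of_adj hcov adj_xy adj_xz hyz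
  · exact card_connectedComponent_sub_one_of_adj_of_adj hcov adj_xy adj_xz hyz
  · exact card_connectedComponent_sub_one_of_adj_of_adj hcov_yxz adj_xy.symm adj_yz hxz
  · exact card_connectedComponent_sub_one_of_adj_of_not_adj hcov adj_xy
      (fun h => adj_xz h.symm) (fun h => adj_yz h.symm)
  · exact card_connectedComponent_sub_one_of_adj_of_adj hcov_zxy adj_xz.symm adj_yz.symm hxy
  · exact card_connectedComponent_sub_one_of_adj_of_not_adj hcov_xzy adj_xz
      (fun h => adj_xy h.symm) adj_yz
  · exact card_connectedComponent_sub_one_of_adj_of_not_adj hcov_yzx adj_yz adj_xy adj_xz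
  · have hbot : H = ⊥ := by
      ext u v
      rcases hcov u with rfl | rfl | rfl <;> rcases hcov v with rfl | rfl | rfl <;>
        simp [adj_xy, adj_xz, adj_yz, mt Adj.symm adj_xy, mt Adj.symm adj_xz,
          mt Adj.symm adj_yz]
    rw [edgeFinset_eq_empty.mpr hbot, hbot, card_connectedComponent_bot, Nat.card_eq_fintype_card,
      hV, card_empty]

variable [DecidableEq V] (G : SimpleGraph V) [DecidableRel G.Adj]

lemma card_edgeFinset_induce_coe (σ : Finset V) :
    #(G.induce (σ : Set V)).edgeFinset = #(G.edgeFinset ∩ σ.sym2) := by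
  -- `map_edgeFinset_induce` is stated with a different `Fintype` instance on `↑σ`.
  have h := congrArg card (G.map_edgeFinset_induce (s := (σ : Set V)))
  rw [card_map, Finset.toFinset_coe] at h
  convert h

lemma card_connectedComponent_induce_sub_one {σ : Finset V} (hσ : #σ = 3) :
    Nat.card (G.induce (σ : Set V)).ConnectedComponent - 1 = 2 - #(G.edgeFinset ∩ σ.sym2) := by
  rw [card_connectedComponent_sub_one_of_card_eq_three (by simpa using hσ),
    card_edgeFinset_induce_coe]

end SimpleGraph

set_option maxRecDepth 2000 in
/-- The sum over all 3-element vertex subsets σ of (c(σ) − 1), where c(σ) is the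
number of connected components of the induced subgraph on σ, equals 105 for both
`G_P` and `G_Q`. -/
theorem stmt_12 :
    (∑ σ ∈ Finset.powersetCard 3 (Finset.univ : Finset (Fin 11)),
        (Nat.card (SimpleGraph.induce (↑σ : Set (Fin 11)) G_P).ConnectedComponent - 1))
      = 105 ∧
    (∑ σ ∈ Finset.powersetCard 3 (Finset.univ : Finset (Fin 11)),
        (Nat.card (SimpleGraph.induce (↑σ : Set (Fin 11)) G_Q).ConnectedComponent - 1))
      = 105 := by
  simp only [sum_congr rfl fun σ hσ =>
    SimpleGraph.card_connectedComponent_induce_sub_one _ (mem_powersetCard.mp hσ).2]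
  constructor <;> decide
end

section
/- The sum over all 7-element vertex subsets σ of (c(σ) − 1), where c(σ) is the number of connected components of the induced subgraph on σ, equals 4 for G_P, and the same sum equals 4 for G_Q. -/
/-! The connected components of a finite graph with linearly ordered vertices are in bijection
with the vertices that are least in their component. For an induced subgraph on `σ`, the component
of `v` is computed by iterating a breadth-first step `#σ` times from `[v]`: a path in the induced
graph has fewer than `#σ` edges. This turns each summand into a computable quantity, and both sums
over the 330 seven-element subsets are then evaluated by the kernel. -/

open Finset

namespace SimpleGraph

variable {V : Type*}

theorem card_connectedComponent_eq_card_least [LinearOrder V] [WellFoundedLT V]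
    (H : SimpleGraph V) :
    Nat.card H.ConnectedComponent = Nat.card {v : V // ∀ u, H.Reachable v u → v ≤ u} := by
  symm
  refine Nat.card_eq_of_bijective (fun v => H.connectedComponentMk v.1) ⟨?_, ?_⟩
  · rintro ⟨a, ha⟩ ⟨b, hb⟩ hab
    have hr : H.Reachable a b := ConnectedComponent.exact hab
    exact Subtype.ext (le_antisymm (ha b hr) (hb a hr.symm))
  · intro c
    induction c using ConnectedComponent.ind with | h v => ?_
    obtain ⟨m, hvm, hmin⟩ :=
      wellFounded_lt.has_min {u | H.Reachable v u} ⟨v, Reachable.refl v⟩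
    exact ⟨⟨m, fun u hmu => not_lt.mp (hmin u (hvm.trans hmu))⟩,
      ConnectedComponent.sound hvm.symm⟩

section ReachList

variable [DecidableEq V] (G : SimpleGraph V) [DecidableRel G.Adj] (l : List V)

def reachStep (s : List V) : List V :=
  l.filter fun w => s.any fun u => u = w ∨ G.Adj u w

def reachList (v : V) : List V :=
  (G.reachStep l)^[l.length] [v]

variable {G l}

theorem mem_reachStep {s : List V} {w : V} :
    w ∈ G.reachStep l s ↔ w ∈ l ∧ ∃ u ∈ s, u = w ∨ G.Adj u w := by
  simp [reachStep]

theorem reachStep_subset_reachStep {s t : List V} (h : s ⊆ t) :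
    G.reachStep l s ⊆ G.reachStep l t := fun _ hw =>
  let ⟨hwl, u, hu, huw⟩ := mem_reachStep.mp hw
  mem_reachStep.mpr ⟨hwl, u, h hu, huw⟩

theorem subset_reachStep {s : List V} (hs : s ⊆ l) : s ⊆ G.reachStep l s := fun w hw =>
  mem_reachStep.mpr ⟨hs hw, w, hw, Or.inl rfl⟩

theorem iterate_reachStep_subset_iterate_reachStep {s t : List V} (h : s ⊆ t) (k : ℕ) :
    (G.reachStep l)^[k] s ⊆ (G.reachStep l)^[k] t := by
  induction k generalizing s t with
  | zero => exact h
  | succ k ih => exact ih (reachStep_subset_reachStep h)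

theorem iterate_reachStep_subset {s : List V} (hs : s ⊆ l) :
    ∀ k, (G.reachStep l)^[k] s ⊆ l
  | 0 => hs
  | k + 1 => by
    rw [Function.iterate_succ_apply']
    exact List.filter_subset_self _

theorem iterate_reachStep_subset_of_le {s : List V} (hs : s ⊆ l) {k m : ℕ} (hkm : k ≤ m) :
    (G.reachStep l)^[k] s ⊆ (G.reachStep l)^[m] s := by
  induction hkm with
  | refl => exact List.Subset.refl _
  | @step m _ ih =>
    rw [Function.iterate_succ_apply']
    exact List.Subset.trans ih (subset_reachStep (iterate_reachStep_subset hs m))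

variable (σ : Finset V) (hl : ∀ x, x ∈ l ↔ x ∈ σ)
include hl

theorem exists_reachable_of_mem_iterate_reachStep {a : ↥(σ : Set V)} (k : ℕ) :
    ∀ {s : List V}, (∀ x ∈ s, ∃ hx : x ∈ σ, (G.induce σ).Reachable a ⟨x, hx⟩) →
      ∀ x ∈ (G.reachStep l)^[k] s, ∃ hx : x ∈ σ, (G.induce σ).Reachable a ⟨x, hx⟩ := by
  induction k with
  | zero => exact id
  | succ k ih =>
    intro s hs
    refine ih fun x hx => ?_
    obtain ⟨hxl, u, hu, rfl | hux⟩ := mem_reachStep.mp hx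
    · exact hs u hu
    · obtain ⟨huσ, hau⟩ := hs u hu
      exact ⟨(hl x).mp hxl, hau.trans (Adj.reachable (induce_adj.mpr hux))⟩

theorem mem_iterate_reachStep_of_walk {a b : ↥(σ : Set V)} (w : (G.induce σ).Walk a b) :
    b.1 ∈ (G.reachStep l)^[w.length] [a.1] := by
  induction w with
  | nil => exact List.mem_singleton_self _
  | @cons a c b hac w ih =>
    rw [Walk.length_cons, Function.iterate_succ_apply]
    refine iterate_reachStep_subset_iterate_reachStep (fun x hx => ?_) _ ih
    rw [List.mem_singleton.mp hx]
    exact mem_reachStep.mpr ⟨(hl c).mpr c.2, a, List.mem_singleton_self _, Or.inr hac⟩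

theorem exists_reachable_of_mem_reachList {a : ↥(σ : Set V)} {x : V}
    (hx : x ∈ G.reachList l a) : ∃ hxσ : x ∈ σ, (G.induce σ).Reachable a ⟨x, hxσ⟩ :=
  exists_reachable_of_mem_iterate_reachStep σ hl l.length
    (fun y hy => by rw [List.mem_singleton.mp hy]; exact ⟨a.2, Reachable.refl a⟩) x hx

theorem mem_reachList_iff {a b : ↥(σ : Set V)} :
    b.1 ∈ G.reachList l a ↔ (G.induce σ).Reachable a b := by
  constructor
  · intro hb
    exact (exists_reachable_of_mem_reachList σ hl hb).2
  · intro h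
    obtain ⟨p, hp⟩ := h.exists_isPath
    have hlen : p.length ≤ l.length := calc
      p.length ≤ #σ := by simpa using hp.length_lt.le
      _ ≤ #l.toFinset := card_le_card fun x hx => List.mem_toFinset.mpr ((hl x).mpr hx)
      _ ≤ l.length := List.toFinset_card_le l
    have ha : [a.1] ⊆ l := List.cons_subset.mpr ⟨(hl a).mpr a.2, List.nil_subset l⟩
    exact iterate_reachStep_subset_of_le ha hlen (mem_iterate_reachStep_of_walk σ hl p)

end ReachList

theorem card_connectedComponent_induce_eq [LinearOrder V] (G : SimpleGraph V) [DecidableRel G.Adj]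
    (σ : Finset V) (l : List V) (hl : ∀ x, x ∈ l ↔ x ∈ σ) :
    Nat.card (G.induce σ).ConnectedComponent = #{v ∈ σ | ∀ u ∈ G.reachList l v, v ≤ u} := by
  have hleast (v : ↥(σ : Set V)) :
      (∀ u, (G.induce σ).Reachable v u → v ≤ u) ↔ ∀ u ∈ G.reachList l v, v.1 ≤ u := by
    refine ⟨fun h u hu => ?_, fun h u hvu => h u ((mem_reachList_iff σ hl).mpr hvu)⟩
    obtain ⟨huσ, hvu⟩ := exists_reachable_of_mem_reachList σ hl hu
    exact h ⟨u, huσ⟩ hvu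
  rw [card_connectedComponent_eq_card_least, ← Nat.card_eq_finsetCard]
  exact Nat.card_congr <| (Equiv.subtypeEquivRight hleast).trans <|
    (Equiv.subtypeSubtypeEquivSubtypeInter (· ∈ σ) fun x => ∀ u ∈ G.reachList l x, x ≤ u).trans <|
      Equiv.subtypeEquivRight fun _ => by rw [mem_filter]

theorem card_connectedComponent_induce_fin {n : ℕ} (G : SimpleGraph (Fin n))
    [DecidableRel G.Adj] (σ : Finset (Fin n)) :
    Nat.card (G.induce σ).ConnectedComponent =
      #{v ∈ σ | ∀ u ∈ G.reachList ((List.finRange n).filter (· ∈ σ)) v, v ≤ u} := by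
  convert G.card_connectedComponent_induce_eq σ ((List.finRange n).filter (· ∈ σ)) fun _ => by simp

end SimpleGraph

/-- The sum over all 7-element vertex subsets σ of (c(σ) − 1), where c(σ) is the
number of connected components of the induced subgraph on σ, equals 4 for both
`G_P` and `G_Q`. -/
theorem stmt_16 :
    (∑ σ ∈ Finset.powersetCard 7 (Finset.univ : Finset (Fin 11)),
        (Nat.card (SimpleGraph.induce (↑σ : Set (Fin 11)) G_P).ConnectedComponent - 1))
      = 4 ∧
    (∑ σ ∈ Finset.powersetCard 7 (Finset.univ : Finset (Fin 11)),
        (Nat.card (SimpleGraph.induce (↑σ : Set (Fin 11)) G_Q).ConnectedComponent - 1))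
      = 4 := by
  simp only [SimpleGraph.card_connectedComponent_induce_fin]
  constructor <;> decide +kernel
end
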